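/- For every N ≥ 3, the mesh of the unique strictly decreasing zero-mean solution of the recursion satisfies δ_N := max_{1 ≤ n ≤ N−1} (x_{N,n} − x_{N,n+1}) ≤ 2/√(log N). -/

import Mathlib

open Finset

/-- Partial sum `S_n = x_1 + ... + x_n`. -/
noncomputable def S (x : ℕ → ℝ) (n : ℕ) : ℝ := ∑ i ∈ Finset.Icc 1 n, x i

/-- `x_1, ..., x_N` is a solution of the recursion `x_{n+1} = x_n - 1/S_n`
with all relevant partial sums nonzero. -/
def IsSolution (N : ℕ) (x : ℕ → ℝ) : Prop :=
  ∀ n, 1 ≤ n → n ≤ N - 1 → S x n ≠ 0 ∧ x (n + 1) = x n - 1 / S x n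

/-- Zero-median property: the middle value is `0` when `N` is odd, and the two middle
values are negatives of each other when `N` is even. -/
def ZeroMedian (N : ℕ) (x : ℕ → ℝ) : Prop :=
  (Odd N → x ((N + 1) / 2) = 0) ∧ (Even N → x (N / 2) = - x (N / 2 + 1))

/-!
Along a solution with positive partial sums the energy `x_n ^ 2 / 2 + log S_n` does not increase,
so with `a = x_1` every `S_n ≤ a e^{a²/2} =: M`. Telescoping the recursion gives
`x_1 - x_N = ∑ 1 / S_n ≥ (N - 1) / M`, while zero mean gives `x_1 - x_N = x_1 + S_{N-1} ≤ 2M`;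
hence `N - 1 ≤ 2 a² e^{a²}`, which forces `x_1 ≥ √(log N) / 2` because at `a² = log N / 4` the
right side is `(log N / 2) N^{1/4} ≤ N - 1`. The reflection `n ↦ -x_{N+1-n}`
is again a decreasing zero-mean solution, so likewise `S_{N-1} = -x_N ≥ √(log N) / 2`. Partial sums
of a decreasing sequence are quasi-concave, so `S_n ≥ min (S_1, S_{N-1})`, and every gap
`x_n - x_{n+1} = 1 / S_n` is at most `2 / √(log N)`.
-/

open Real

lemma S_zero (x : ℕ → ℝ) : S x 0 = 0 := by simp [S]

lemma S_one (x : ℕ → ℝ) : S x 1 = x 1 := by simp [S]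

lemma S_succ (x : ℕ → ℝ) (n : ℕ) : S x (n + 1) = S x n + x (n + 1) :=
  Finset.sum_Icc_succ_top (by omega) x

lemma S_add_sum_Ioc (x : ℕ → ℝ) {m n : ℕ} (h : m ≤ n) : S x m + ∑ k ∈ Ioc m n, x k = S x n := by
  simpa only [S, ← Finset.Icc_add_one_left_eq_Ioc, zero_add] using
    Finset.sum_Ioc_consecutive x (Nat.zero_le m) h

lemma S_pred_eq_neg {x : ℕ → ℝ} {N : ℕ} (hN : 1 ≤ N) (hmean : S x N = 0) : S x (N - 1) = -x N := by
  have h := S_succ x (N - 1)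
  rw [Nat.sub_add_cancel hN, hmean] at h
  linarith

lemma S_reflect (x : ℕ → ℝ) {N j : ℕ} (hj : j ≤ N) :
    S (fun i => -x (N + 1 - i)) j = S x (N - j) - S x N := by
  induction j with
  | zero => simp [S_zero]
  | succ j ih =>
    have h := S_succ x (N - (j + 1))
    rw [show N - (j + 1) + 1 = N - j by omega] at h
    rw [S_succ, ih (by omega), show N + 1 - (j + 1) = N - j by omega]
    linarith

lemma min_S_le_S_of_antitoneOn {x : ℕ → ℝ} {N m n k : ℕ} (hx : AntitoneOn x (Set.Icc 1 N))
    (hm : 1 ≤ m) (hmn : m ≤ n) (hnk : n ≤ k) (hk : k ≤ N) : min (S x m) (S x k) ≤ S x n := by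
  have hxn : ∀ i, 1 ≤ i → i ≤ N → (i ≤ n → x n ≤ x i) ∧ (n ≤ i → x i ≤ x n) := fun i hi hiN =>
    ⟨fun h => hx ⟨hi, hiN⟩ ⟨by omega, by omega⟩ h, fun h => hx ⟨by omega, by omega⟩ ⟨hi, hiN⟩ h⟩
  rcases le_or_gt 0 (x n) with hpos | hneg
  · refine (min_le_left _ _).trans ?_
    rw [← S_add_sum_Ioc x hmn]
    refine le_add_of_nonneg_right (Finset.sum_nonneg fun i hi => ?_)
    rw [Finset.mem_Ioc] at hi
    exact hpos.trans ((hxn i (by omega) (by omega)).1 hi.2)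
  · refine (min_le_right _ _).trans ?_
    rw [← S_add_sum_Ioc x hnk]
    refine add_le_of_nonpos_right (Finset.sum_nonpos fun i hi => ?_)
    rw [Finset.mem_Ioc] at hi
    exact ((hxn i (by omega) (by omega)).2 hi.1.le).trans hneg.le

lemma energy_step {s u v : ℝ} (hs : 0 < s) (hsv : 0 < s + v) (hv : v = u - 1 / s) :
    v ^ 2 / 2 + log (s + v) ≤ u ^ 2 / 2 + log s := by
  have hlog : log (s + v) - log s ≤ v / s := by
    rw [← log_div hsv.ne' hs.ne']
    calc log ((s + v) / s) ≤ (s + v) / s - 1 := log_le_sub_one_of_pos (div_pos hsv hs)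
      _ = v / s := by field_simp; ring
  have hu : u ^ 2 / 2 = v ^ 2 / 2 + v / s + (1 / s) ^ 2 / 2 := by
    rw [show u = v + 1 / s by linarith]
    ring
  nlinarith [sq_nonneg (1 / s)]

lemma log_div_two_mul_exp_log_div_four_le {t : ℝ} (ht : 1 ≤ t) :
    log t / 2 * exp (log t / 4) ≤ t - 1 := by
  have hu4 : exp (log t / 4) ^ 4 = t := by
    rw [← exp_nat_mul, Nat.cast_ofNat, mul_div_cancel₀ _ four_ne_zero, exp_log (by linarith)]
  have hu1 : 1 ≤ exp (log t / 4) := one_le_exp (by linarith [log_nonneg ht])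
  have hlog : log t / 4 ≤ exp (log t / 4) - 1 := by linarith [add_one_le_exp (log t / 4)]
  generalize exp (log t / 4) = u at hu4 hu1 hlog ⊢
  have hcubic : 0 ≤ u ^ 3 + u ^ 2 - u + 1 := by nlinarith
  calc log t / 2 * u ≤ 2 * (u - 1) * u := by nlinarith
    _ = u ^ 4 - 1 - (u - 1) * (u ^ 3 + u ^ 2 - u + 1) := by ring
    _ ≤ t - 1 := by nlinarith [mul_nonneg (sub_nonneg.mpr hu1) hcubic]

lemma log_le_four_mul_of_sub_one_le {t b : ℝ} (ht : 1 < t) (hb : 0 ≤ b)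
    (h : t - 1 ≤ 2 * b * exp b) : log t ≤ 4 * b := by
  by_contra! hlt
  have hlt' : 2 * b * exp b < log t / 2 * exp (log t / 4) :=
    mul_lt_mul'' (by linarith) (exp_lt_exp.mpr (by linarith)) (by positivity) (exp_pos b).le
  linarith [log_div_two_mul_exp_log_div_four_le ht.le]

namespace IsSolution

variable {N : ℕ} {x : ℕ → ℝ}

lemma sub_succ (hsol : IsSolution N x) {n : ℕ} (h1 : 1 ≤ n) (h2 : n ≤ N - 1) :
    x n - x (n + 1) = 1 / S x n := by
  rw [(hsol n h1 h2).2]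
  ring

lemma S_pos (hsol : IsSolution N x) {n : ℕ} (h1 : 1 ≤ n) (h2 : n ≤ N - 1)
    (hlt : x (n + 1) < x n) : 0 < S x n :=
  one_div_pos.mp (by linarith [hsol.sub_succ h1 h2])

lemma sub_eq_sum (hsol : IsSolution N x) (hN : 1 ≤ N) :
    x 1 - x N = ∑ n ∈ Ico 1 N, 1 / S x n := by
  rw [← neg_sub_neg, ← Finset.sum_Ico_sub (fun n => -x n) hN]
  refine Finset.sum_congr rfl fun n hn => ?_
  rw [Finset.mem_Ico] at hn
  rw [← hsol.sub_succ hn.1 (by omega)]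
  ring

lemma energy_le (hsol : IsSolution N x) (hpos : ∀ n, 1 ≤ n → n ≤ N - 1 → 0 < S x n) {n : ℕ}
    (h1 : 1 ≤ n) (h2 : n ≤ N - 1) : x n ^ 2 / 2 + log (S x n) ≤ x 1 ^ 2 / 2 + log (x 1) := by
  induction n, h1 using Nat.le_induction with
  | base => rw [S_one]
  | succ n hn ih =>
    have hstep := energy_step (hpos n hn (by omega)) (S_succ x n ▸ hpos (n + 1) (by omega) h2)
      (hsol n hn (by omega)).2
    rw [← S_succ] at hstep
    exact hstep.trans (ih (by omega))

lemma S_le (hsol : IsSolution N x) (hpos : ∀ n, 1 ≤ n → n ≤ N - 1 → 0 < S x n) {n : ℕ}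
    (h1 : 1 ≤ n) (h2 : n ≤ N - 1) : S x n ≤ x 1 * exp (x 1 ^ 2 / 2) := by
  have hx1 : 0 < x 1 := S_one x ▸ hpos 1 le_rfl (by omega)
  have hE := hsol.energy_le hpos h1 h2
  calc S x n = exp (log (S x n)) := (exp_log (hpos n h1 h2)).symm
    _ ≤ exp (log (x 1) + x 1 ^ 2 / 2) := exp_le_exp.mpr (by nlinarith [sq_nonneg (x n)])
    _ = x 1 * exp (x 1 ^ 2 / 2) := by rw [exp_add, exp_log hx1]

lemma sqrt_log_div_two_le (hsol : IsSolution N x) (hN : 3 ≤ N)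
    (hdec : ∀ n, 1 ≤ n → n < N → x (n + 1) < x n) (hmean : S x N = 0) :
    √(log N) / 2 ≤ x 1 := by
  have hpos : ∀ n, 1 ≤ n → n ≤ N - 1 → 0 < S x n := fun n h1 h2 =>
    hsol.S_pos h1 h2 (hdec n h1 (by omega))
  have hx1 : 0 < x 1 := S_one x ▸ hpos 1 le_rfl (by omega)
  set M := x 1 * exp (x 1 ^ 2 / 2)
  have hM : 0 < M := by positivity
  have hx1M : x 1 ≤ M := le_mul_of_one_le_right hx1.le (one_le_exp (by positivity))
  have hlow : (N - 1 : ℝ) * (1 / M) ≤ x 1 - x N := by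
    have h := Finset.card_nsmul_le_sum (Ico 1 N) (fun n => 1 / S x n) (1 / M) fun n hn => by
      rw [Finset.mem_Ico] at hn
      exact one_div_le_one_div_of_le (hpos n hn.1 (by omega)) (hsol.S_le hpos hn.1 (by omega))
    rwa [Nat.card_Ico, nsmul_eq_mul, Nat.cast_sub (by omega), Nat.cast_one,
      ← hsol.sub_eq_sum (by omega)] at h
  have hup : x 1 - x N ≤ 2 * M := by
    linarith [S_pred_eq_neg (by omega) hmean, hsol.S_le hpos (n := N - 1) (by omega) le_rfl]
  have hgrowth : (N : ℝ) - 1 ≤ 2 * x 1 ^ 2 * exp (x 1 ^ 2) := by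
    have h : (N - 1 : ℝ) ≤ 2 * M * M := by
      rw [← div_le_iff₀ hM, div_eq_mul_one_div]
      exact hlow.trans hup
    calc (N : ℝ) - 1 ≤ 2 * M * M := h
      _ = 2 * x 1 ^ 2 * exp (x 1 ^ 2) := by rw [mul_assoc, ← sq, mul_pow, ← exp_nat_mul]; ring_nf
  have hlog := log_le_four_mul_of_sub_one_le (by exact_mod_cast (by omega : 1 < N)) (sq_nonneg _)
    hgrowth
  rw [div_le_iff₀ two_pos, ← abs_of_pos (by positivity : 0 < x 1 * 2), ← sqrt_sq_eq_abs]
  exact sqrt_le_sqrt (by linarith)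

lemma reflect (hsol : IsSolution N x) (hmean : S x N = 0) :
    IsSolution N (fun i => -x (N + 1 - i)) := by
  intro n h1 h2
  obtain ⟨hne, hrec⟩ := hsol (N - n) (by omega) (by omega)
  rw [S_reflect x (by omega), hmean, sub_zero]
  refine ⟨hne, ?_⟩
  simp only [show N + 1 - (n + 1) = N - n by omega, show N + 1 - n = N - n + 1 by omega, hrec]
  ring

lemma sqrt_log_div_two_le_S_pred (hsol : IsSolution N x) (hN : 3 ≤ N)
    (hdec : ∀ n, 1 ≤ n → n < N → x (n + 1) < x n) (hmean : S x N = 0) :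
    √(log N) / 2 ≤ S x (N - 1) := by
  have h := (hsol.reflect hmean).sqrt_log_div_two_le hN
    (fun n h1 h2 => by
      simp only [show N + 1 - (n + 1) = N - n by omega, show N + 1 - n = N - n + 1 by omega]
      linarith [hdec (N - n) (by omega) (by omega)])
    (by rw [S_reflect x le_rfl, hmean, Nat.sub_self, S_zero, sub_zero])
  rwa [show N + 1 - 1 = N by omega, ← S_pred_eq_neg (by omega) hmean] at h

end IsSolution

/-- The mesh `δ_N = max_{1 ≤ n ≤ N-1} (x_{N,n} - x_{N,n+1})` of the unique strictly
decreasing zero-mean solution is at most `2 / √(log N)`. -/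
theorem mesh_bound (N : ℕ) (hN : 3 ≤ N) (x : ℕ → ℝ)
    (hsol : IsSolution N x) (hdec : ∀ n, 1 ≤ n → n < N → x (n + 1) < x n)
    (hmean : ∑ i ∈ Finset.Icc 1 N, x i = 0) :
    (Finset.Icc 1 (N - 1)).sup' (by rw [Finset.nonempty_Icc]; omega)
        (fun n => x n - x (n + 1)) ≤ 2 / Real.sqrt (Real.log N) := by
  have hfirst := hsol.sqrt_log_div_two_le hN hdec hmean
  have hlast := hsol.sqrt_log_div_two_le_S_pred hN hdec hmean
  have hanti : AntitoneOn x (Set.Icc 1 N) := antitoneOn_of_add_one_le Set.ordConnected_Icc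
    fun n _ hn hn1 => (hdec n hn.1 (by have := hn1.2; omega)).le
  have hL : 0 < √(log N) / 2 := by
    have : (1 : ℝ) < N := by exact_mod_cast (by omega : 1 < N)
    positivity [log_pos this]
  refine Finset.sup'_le _ _ fun n hn => ?_
  rw [Finset.mem_Icc] at hn
  have hSn : √(log N) / 2 ≤ S x n := by
    have h := min_S_le_S_of_antitoneOn hanti le_rfl hn.1 hn.2 (Nat.sub_le N 1)
    rw [S_one] at h
    exact (le_min hfirst hlast).trans h
  calc x n - x (n + 1) = 1 / S x n := hsol.sub_succ hn.1 hn.2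
    _ ≤ 1 / (√(log N) / 2) := one_div_le_one_div_of_le hL hSn
    _ = 2 / √(log N) := one_div_div _ _
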